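/- Assume additionally 0 ≤ S(x,t) ≤ S₀(x) for all x ∈ W and t ≥ 0, and let κ : ∂W × (0,∞) → ℝ be continuous such that the boundary condition ∂T/∂n(x,t) = κ(x,t) holds for all x ∈ ∂W and t > 0. Then B is differentiable on (0,∞) and, for every t > 0, B′(t) ≤ −α·B(t) + ε·∫_{∂W} κ(x,t)·(T(x,t)−T_a) dσ − ½·∫_{∂W} (n(x)·v(x,t))·(T(x,t)−T_a)² dσ + 2ε·(R₂/R₁)·∫_{∂W} (T(x,t)−T_a)² dσ. -/

import Mathlib

open Set MeasureTheory intervalIntegral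

/-- The shifted Arrhenius reaction-rate function with activation parameter `γ`. -/
noncomputable def rt (γ s : ℝ) : ℝ := if 0 < s then Real.exp (-γ / s) else 0

/-- The four-edge boundary integral `∫_{∂W} g dσ` over the boundary of the
rectangle `[a₁,b₁]×[a₂,b₂]`. -/
noncomputable def bInt (a₁ b₁ a₂ b₂ : ℝ) (g : ℝ → ℝ → ℝ) : ℝ :=
  (∫ y in a₂..b₂, g a₁ y) + (∫ y in a₂..b₂, g b₁ y) +
  (∫ x in a₁..b₁, g x a₂) + (∫ x in a₁..b₁, g x b₂)

/-!
Multiply the temperature equation by `u = T - Tₐ` and integrate over `W`. Pointwise,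
`u ∂ₜT` is bounded by a sum of three divergences, of `ε u ∇T`, `-½ u² v` and `(ε/R₁) u² x`,
plus `-(α/2) u²`: the advection term is `-½ v·∇(u²) = -½ div(u² v) + ½ (div v) u²`, the
reaction term is controlled by `s e^{-γ/s} ≤ s²/(eγ)`, and the Dirichlet energy `ε |∇T|²`
is traded for `(ε/R₁)(u² + x·∇(u²))` by expanding `(u + x·∇T)² ≥ 0` with
`(x·∇T)² ≤ R₁ |∇T|²`. Integrating, the divergence theorem on the rectangle turns the three
divergences into the boundary terms; on `∂W` the weight `x·n` is at most `R₂`.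
-/

lemma mul_rt_le {γ M S s : ℝ} (hγ : 0 < γ) (hS : 0 ≤ S) (hSM : S ≤ M) :
    s * (S * rt γ s) ≤ M * (Real.exp (-1) / γ) * s ^ 2 := by
  unfold rt
  split_ifs with hs
  · have key : s * Real.exp (-γ / s) ≤ Real.exp (-1) / γ * s ^ 2 := by
      rw [div_mul_eq_mul_div, le_div_iff₀ hγ, neg_div]
      calc s * Real.exp (-(γ / s)) * γ = γ / s * Real.exp (-(γ / s)) * s ^ 2 := by
            field_simp
        _ ≤ Real.exp (-1) * s ^ 2 := by gcongr; exact Real.mul_exp_neg_le_exp_neg_one _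
    calc s * (S * Real.exp (-γ / s)) = S * (s * Real.exp (-γ / s)) := by ring
      _ ≤ M * (Real.exp (-1) / γ * s ^ 2) :=
        mul_le_mul hSM key (mul_pos hs (Real.exp_pos _)).le (hS.trans hSM)
      _ = _ := by ring
  · have : 0 ≤ M := hS.trans hSM
    simp only [mul_zero]
    positivity

lemma energy_density_le {ε A C γ Vs M R α u T₁ T₂ T₁₁ T₂₂ v₁ v₂ dv₁ dv₂ S x y : ℝ}
    (hε : 0 ≤ ε) (hA : 0 ≤ A) (hγ : 0 < γ) (hR : 0 < R) (hxy : x ^ 2 + y ^ 2 ≤ R)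
    (hdiv : dv₁ + dv₂ ≤ Vs) (hS : 0 ≤ S) (hSM : S ≤ M)
    (hα : α = 2 * A * C + 2 * ε / R - Vs - (2 * A * Real.exp (-1) / γ) * M) :
    u * (ε * (T₁₁ + T₂₂) - (v₁ * T₁ + v₂ * T₂) + A * (S * rt γ u - C * u)) ≤
      ε * ((T₁ * T₁ + u * T₁₁) + (T₂ * T₂ + u * T₂₂))
      - 1 / 2 * ((dv₁ * u ^ 2 + v₁ * (2 * u * T₁)) + (dv₂ * u ^ 2 + v₂ * (2 * u * T₂)))
      + ε / R * ((u ^ 2 + x * (2 * u * T₁)) + (u ^ 2 + y * (2 * u * T₂)))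
      - α / 2 * u ^ 2 := by
  have hreact := mul_rt_le (s := u) hγ hS hSM
  have hgrad : 0 ≤ R * (T₁ ^ 2 + T₂ ^ 2) + u ^ 2 + 2 * u * (x * T₁ + y * T₂) := by
    nlinarith [sq_nonneg (u + x * T₁ + y * T₂), sq_nonneg (x * T₂ - y * T₁),
      mul_le_mul_of_nonneg_right hxy (add_nonneg (sq_nonneg T₁) (sq_nonneg T₂))]
  have hsplit : ε * ((T₁ * T₁ + u * T₁₁) + (T₂ * T₂ + u * T₂₂))
      - 1 / 2 * ((dv₁ * u ^ 2 + v₁ * (2 * u * T₁)) + (dv₂ * u ^ 2 + v₂ * (2 * u * T₂)))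
      + ε / R * ((u ^ 2 + x * (2 * u * T₁)) + (u ^ 2 + y * (2 * u * T₂)))
      - α / 2 * u ^ 2
      - u * (ε * (T₁₁ + T₂₂) - (v₁ * T₁ + v₂ * T₂) + A * (S * rt γ u - C * u)) =
      ε / R * (R * (T₁ ^ 2 + T₂ ^ 2) + u ^ 2 + 2 * u * (x * T₁ + y * T₂))
      + 1 / 2 * (Vs - (dv₁ + dv₂)) * u ^ 2
      + A * (M * (Real.exp (-1) / γ) * u ^ 2 - u * (S * rt γ u)) := by
    subst hα
    field_simp
    ring
  have := mul_nonneg (div_nonneg hε hR.le) hgrad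
  have := mul_nonneg (mul_nonneg (one_div_nonneg.2 zero_le_two) (sub_nonneg.2 hdiv)) (sq_nonneg u)
  have := mul_nonneg hA (sub_nonneg.2 hreact)
  linarith

lemma hasDerivAt_sub_const_sq {f : ℝ → ℝ} {f' s : ℝ} (c : ℝ) (hf : HasDerivAt f f' s) :
    HasDerivAt (fun r => (f r - c) ^ 2) (2 * (f s - c) * f') s :=
  ((hf.sub_const c).pow 2).congr_deriv (by push_cast; ring)

section Rectangle

variable {a₁ b₁ a₂ b₂ : ℝ} {f g : ℝ → ℝ → ℝ}

lemma integral_integral_eq_setIntegral (h₁ : a₁ ≤ b₁) (h₂ : a₂ ≤ b₂)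
    (hf : ContinuousOn (fun p : ℝ × ℝ => f p.1 p.2) (Icc a₁ b₁ ×ˢ Icc a₂ b₂)) :
    ∫ x in a₁..b₁, ∫ y in a₂..b₂, f x y = ∫ p in Icc a₁ b₁ ×ˢ Icc a₂ b₂, f p.1 p.2 := by
  rw [Measure.volume_eq_prod, setIntegral_prod _ ?_]
  · simp only [integral_of_le h₁, integral_of_le h₂, integral_Icc_eq_integral_Ioc]
  · rw [← Measure.volume_eq_prod]
    exact hf.integrableOn_compact (isCompact_Icc.prod isCompact_Icc)

lemma integral_integral_add (h₁ : a₁ ≤ b₁) (h₂ : a₂ ≤ b₂)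
    (hf : ContinuousOn (fun p : ℝ × ℝ => f p.1 p.2) (Icc a₁ b₁ ×ˢ Icc a₂ b₂))
    (hg : ContinuousOn (fun p : ℝ × ℝ => g p.1 p.2) (Icc a₁ b₁ ×ˢ Icc a₂ b₂)) :
    ∫ x in a₁..b₁, ∫ y in a₂..b₂, (f x y + g x y) =
      (∫ x in a₁..b₁, ∫ y in a₂..b₂, f x y) + ∫ x in a₁..b₁, ∫ y in a₂..b₂, g x y := by
  rw [integral_integral_eq_setIntegral h₁ h₂ (hf.add hg), integral_integral_eq_setIntegral h₁ h₂ hf,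
    integral_integral_eq_setIntegral h₁ h₂ hg]
  exact integral_add (hf.integrableOn_compact (isCompact_Icc.prod isCompact_Icc))
    (hg.integrableOn_compact (isCompact_Icc.prod isCompact_Icc))

lemma integral_integral_sub (h₁ : a₁ ≤ b₁) (h₂ : a₂ ≤ b₂)
    (hf : ContinuousOn (fun p : ℝ × ℝ => f p.1 p.2) (Icc a₁ b₁ ×ˢ Icc a₂ b₂))
    (hg : ContinuousOn (fun p : ℝ × ℝ => g p.1 p.2) (Icc a₁ b₁ ×ˢ Icc a₂ b₂)) :
    ∫ x in a₁..b₁, ∫ y in a₂..b₂, (f x y - g x y) =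
      (∫ x in a₁..b₁, ∫ y in a₂..b₂, f x y) - ∫ x in a₁..b₁, ∫ y in a₂..b₂, g x y := by
  rw [integral_integral_eq_setIntegral h₁ h₂ (hf.sub hg), integral_integral_eq_setIntegral h₁ h₂ hf,
    integral_integral_eq_setIntegral h₁ h₂ hg]
  exact integral_sub (hf.integrableOn_compact (isCompact_Icc.prod isCompact_Icc))
    (hg.integrableOn_compact (isCompact_Icc.prod isCompact_Icc))

lemma integral_integral_const_mul (c : ℝ) :
    ∫ x in a₁..b₁, ∫ y in a₂..b₂, c * f x y = c * ∫ x in a₁..b₁, ∫ y in a₂..b₂, f x y := by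
  simp_rw [intervalIntegral.integral_const_mul]

lemma integral_integral_mono (h₁ : a₁ ≤ b₁) (h₂ : a₂ ≤ b₂)
    (hf : ContinuousOn (fun p : ℝ × ℝ => f p.1 p.2) (Icc a₁ b₁ ×ˢ Icc a₂ b₂))
    (hg : ContinuousOn (fun p : ℝ × ℝ => g p.1 p.2) (Icc a₁ b₁ ×ˢ Icc a₂ b₂))
    (hfg : ∀ x ∈ Icc a₁ b₁, ∀ y ∈ Icc a₂ b₂, f x y ≤ g x y) :
    ∫ x in a₁..b₁, ∫ y in a₂..b₂, f x y ≤ ∫ x in a₁..b₁, ∫ y in a₂..b₂, g x y := by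
  rw [integral_integral_eq_setIntegral h₁ h₂ hf, integral_integral_eq_setIntegral h₁ h₂ hg]
  exact setIntegral_mono_on (hf.integrableOn_compact (isCompact_Icc.prod isCompact_Icc))
    (hg.integrableOn_compact (isCompact_Icc.prod isCompact_Icc))
    (measurableSet_Icc.prod measurableSet_Icc) fun p hp => hfg p.1 hp.1 p.2 hp.2

lemma integral_integral_swap (h₁ : a₁ ≤ b₁) (h₂ : a₂ ≤ b₂)
    (hf : ContinuousOn (fun p : ℝ × ℝ => f p.1 p.2) (Icc a₁ b₁ ×ˢ Icc a₂ b₂)) :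
    ∫ x in a₁..b₁, ∫ y in a₂..b₂, f x y = ∫ y in a₂..b₂, ∫ x in a₁..b₁, f x y := by
  have hf' : ContinuousOn (fun q : ℝ × ℝ => f q.2 q.1) (Icc a₂ b₂ ×ˢ Icc a₁ b₁) :=
    hf.comp continuous_swap.continuousOn fun q hq => ⟨hq.2, hq.1⟩
  rw [integral_integral_eq_setIntegral h₁ h₂ hf,
    integral_integral_eq_setIntegral h₂ h₁ (f := fun y x => f x y) hf', Measure.volume_eq_prod]
  exact (setIntegral_prod_swap (μ := volume) (ν := volume) (Icc a₁ b₁) (Icc a₂ b₂)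
    fun q => f q.1 q.2).symm

lemma hasDerivAt_integral_integral (h₁ : a₁ ≤ b₁) (h₂ : a₂ ≤ b₂) {F F' : ℝ → ℝ → ℝ → ℝ}
    {t δ : ℝ} (hδ : 0 < δ)
    (hF : ∀ τ ∈ Metric.ball t δ,
      ContinuousOn (fun p : ℝ × ℝ => F p.1 p.2 τ) (Icc a₁ b₁ ×ˢ Icc a₂ b₂))
    (hF' : ContinuousOn (fun q : (ℝ × ℝ) × ℝ => F' q.1.1 q.1.2 q.2)
      ((Icc a₁ b₁ ×ˢ Icc a₂ b₂) ×ˢ Metric.closedBall t δ))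
    (hderiv : ∀ x ∈ Icc a₁ b₁, ∀ y ∈ Icc a₂ b₂, ∀ τ ∈ Metric.ball t δ,
      HasDerivAt (F x y) (F' x y τ) τ) :
    HasDerivAt (fun τ => ∫ x in a₁..b₁, ∫ y in a₂..b₂, F x y τ)
      (∫ x in a₁..b₁, ∫ y in a₂..b₂, F' x y t) t := by
  set K := Icc a₁ b₁ ×ˢ Icc a₂ b₂
  have hK : IsCompact K := isCompact_Icc.prod isCompact_Icc
  have hKm : MeasurableSet K := measurableSet_Icc.prod measurableSet_Icc
  obtain ⟨M, hM⟩ := (hK.prod (isCompact_closedBall t δ)).exists_bound_of_continuousOn hF'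
  have hF't : ContinuousOn (fun p : ℝ × ℝ => F' p.1 p.2 t) K :=
    hF'.comp (continuous_id.prodMk continuous_const).continuousOn
      fun p hp => ⟨hp, Metric.mem_closedBall_self hδ.le⟩
  have hball := Metric.ball_mem_nhds t hδ
  have key := _root_.hasDerivAt_integral_of_dominated_loc_of_deriv_le (μ := volume.restrict K)
    (F := fun τ p => F p.1 p.2 τ) (F' := fun τ p => F' p.1 p.2 τ) (bound := fun _ => M) hball
    (Filter.eventually_of_mem hball fun τ hτ => (hF τ hτ).aestronglyMeasurable hKm)
    ((hF t (Metric.mem_ball_self hδ)).integrableOn_compact hK)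
    (hF't.aestronglyMeasurable hKm)
    ((ae_restrict_mem hKm).mono fun p hp τ hτ =>
      hM (p, τ) ⟨hp, Metric.ball_subset_closedBall hτ⟩)
    (integrableOn_const hK.measure_lt_top.ne)
    ((ae_restrict_mem hKm).mono fun p hp τ hτ => hderiv p.1 hp.1 p.2 hp.2 τ hτ)
  rw [integral_integral_eq_setIntegral h₁ h₂ hF't]
  refine key.2.congr_of_eventuallyEq (Filter.eventually_of_mem hball fun τ hτ => ?_)
  exact integral_integral_eq_setIntegral h₁ h₂ (hF τ hτ)

lemma integral_integral_divergence (h₁ : a₁ ≤ b₁) (h₂ : a₂ ≤ b₂) {F₁ F₂ D₁ D₂ : ℝ → ℝ → ℝ}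
    (hF₁ : ContinuousOn (fun p : ℝ × ℝ => F₁ p.1 p.2) (Icc a₁ b₁ ×ˢ Icc a₂ b₂))
    (hF₂ : ContinuousOn (fun p : ℝ × ℝ => F₂ p.1 p.2) (Icc a₁ b₁ ×ˢ Icc a₂ b₂))
    (hD₁ : ContinuousOn (fun p : ℝ × ℝ => D₁ p.1 p.2) (Icc a₁ b₁ ×ˢ Icc a₂ b₂))
    (hD₂ : ContinuousOn (fun p : ℝ × ℝ => D₂ p.1 p.2) (Icc a₁ b₁ ×ˢ Icc a₂ b₂))
    (hd₁ : ∀ x ∈ Icc a₁ b₁, ∀ y ∈ Icc a₂ b₂, HasDerivAt (F₁ · y) (D₁ x y) x)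
    (hd₂ : ∀ x ∈ Icc a₁ b₁, ∀ y ∈ Icc a₂ b₂, HasDerivAt (F₂ x ·) (D₂ x y) y) :
    ∫ x in a₁..b₁, ∫ y in a₂..b₂, (D₁ x y + D₂ x y) =
      (∫ y in a₂..b₂, F₁ b₁ y) - (∫ y in a₂..b₂, F₁ a₁ y)
        + (∫ x in a₁..b₁, F₂ x b₂) - ∫ x in a₁..b₁, F₂ x a₂ := by
  have slice_x {F : ℝ → ℝ → ℝ}
      (hF : ContinuousOn (fun p : ℝ × ℝ => F p.1 p.2) (Icc a₁ b₁ ×ˢ Icc a₂ b₂))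
      {x : ℝ} (hx : x ∈ Icc a₁ b₁) : IntervalIntegrable (F x) volume a₂ b₂ :=
    (hF.comp (continuous_const.prodMk continuous_id).continuousOn
      fun y hy => ⟨hx, hy⟩).intervalIntegrable_of_Icc h₂
  have slice_y {F : ℝ → ℝ → ℝ}
      (hF : ContinuousOn (fun p : ℝ × ℝ => F p.1 p.2) (Icc a₁ b₁ ×ˢ Icc a₂ b₂))
      {y : ℝ} (hy : y ∈ Icc a₂ b₂) : IntervalIntegrable (F · y) volume a₁ b₁ :=
    (hF.comp (continuous_id.prodMk continuous_const).continuousOn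
      fun x hx => ⟨hx, hy⟩).intervalIntegrable_of_Icc h₁
  have hx : ∫ y in a₂..b₂, ∫ x in a₁..b₁, D₁ x y =
      (∫ y in a₂..b₂, F₁ b₁ y) - ∫ y in a₂..b₂, F₁ a₁ y := by
    rw [← integral_sub (slice_x hF₁ (right_mem_Icc.2 h₁)) (slice_x hF₁ (left_mem_Icc.2 h₁))]
    refine integral_congr fun y hy => ?_
    rw [uIcc_of_le h₂] at hy
    exact integral_eq_sub_of_hasDerivAt (fun x hx => hd₁ x (uIcc_of_le h₁ ▸ hx) y hy)
      (slice_y hD₁ hy)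
  have hy : ∫ x in a₁..b₁, ∫ y in a₂..b₂, D₂ x y =
      (∫ x in a₁..b₁, F₂ x b₂) - ∫ x in a₁..b₁, F₂ x a₂ := by
    rw [← integral_sub (slice_y hF₂ (right_mem_Icc.2 h₂)) (slice_y hF₂ (left_mem_Icc.2 h₂))]
    refine integral_congr fun x hx => ?_
    rw [uIcc_of_le h₁] at hx
    exact integral_eq_sub_of_hasDerivAt (fun y hy => hd₂ x hx y (uIcc_of_le h₂ ▸ hy))
      (slice_x hD₂ hx)
  rw [integral_integral_add h₁ h₂ hD₁ hD₂, integral_integral_swap h₁ h₂ hD₁, hx, hy]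
  ring

lemma boundary_flux_eq_bInt (h₁ : a₁ ≤ b₁) (h₂ : a₂ ≤ b₂) {u g₁ g₂ κ : ℝ → ℝ → ℝ}
    (hl : ∀ y ∈ Icc a₂ b₂, -g₁ a₁ y = κ a₁ y) (hr : ∀ y ∈ Icc a₂ b₂, g₁ b₁ y = κ b₁ y)
    (hb : ∀ x ∈ Icc a₁ b₁, -g₂ x a₂ = κ x a₂) (ht : ∀ x ∈ Icc a₁ b₁, g₂ x b₂ = κ x b₂) :
    (∫ y in a₂..b₂, u b₁ y * g₁ b₁ y) - (∫ y in a₂..b₂, u a₁ y * g₁ a₁ y)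
      + (∫ x in a₁..b₁, u x b₂ * g₂ x b₂) - (∫ x in a₁..b₁, u x a₂ * g₂ x a₂) =
      bInt a₁ b₁ a₂ b₂ (fun x y => κ x y * u x y) := by
  have edge {a b : ℝ} (hab : a ≤ b) {φ ψ : ℝ → ℝ} (h : ∀ s ∈ Icc a b, φ s = ψ s) (w : ℝ → ℝ) :
      ∫ s in a..b, w s * φ s = ∫ s in a..b, ψ s * w s :=
    integral_congr fun s hs => by rw [h s (uIcc_of_le hab ▸ hs), mul_comm]
  have neg_edge {a b : ℝ} (hab : a ≤ b) {φ ψ : ℝ → ℝ} (h : ∀ s ∈ Icc a b, -φ s = ψ s)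
      (w : ℝ → ℝ) : ∫ s in a..b, w s * φ s = -∫ s in a..b, ψ s * w s := by
    rw [← intervalIntegral.integral_neg]
    exact integral_congr fun s hs => by rw [← h s (uIcc_of_le hab ▸ hs)]; ring
  rw [edge h₂ hr, neg_edge h₂ hl, edge h₁ ht, neg_edge h₁ hb, bInt]
  ring

lemma bInt_nonneg (h₁ : a₁ ≤ b₁) (h₂ : a₂ ≤ b₂) (hg : ∀ x y, 0 ≤ g x y) :
    0 ≤ bInt a₁ b₁ a₂ b₂ g := by
  unfold bInt
  have := integral_nonneg (μ := volume) h₁ fun x _ => hg x a₂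
  have := integral_nonneg (μ := volume) h₁ fun x _ => hg x b₂
  have := integral_nonneg (μ := volume) h₂ fun y _ => hg a₁ y
  have := integral_nonneg (μ := volume) h₂ fun y _ => hg b₁ y
  positivity

lemma boundary_moment_le (h₁ : a₁ ≤ b₁) (h₂ : a₂ ≤ b₂) {R : ℝ} (hb₁ : b₁ ≤ R) (ha₁ : -a₁ ≤ R)
    (hb₂ : b₂ ≤ R) (ha₂ : -a₂ ≤ R) (hg : ∀ x y, 0 ≤ g x y) :
    (∫ y in a₂..b₂, b₁ * g b₁ y) - (∫ y in a₂..b₂, a₁ * g a₁ y)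
      + (∫ x in a₁..b₁, b₂ * g x b₂) - (∫ x in a₁..b₁, a₂ * g x a₂) ≤
      R * bInt a₁ b₁ a₂ b₂ g := by
  have hl := integral_nonneg (μ := volume) h₂ fun y _ => hg a₁ y
  have hr := integral_nonneg (μ := volume) h₂ fun y _ => hg b₁ y
  have hb := integral_nonneg (μ := volume) h₁ fun x _ => hg x a₂
  have ht := integral_nonneg (μ := volume) h₁ fun x _ => hg x b₂
  simp only [intervalIntegral.integral_const_mul, bInt]
  nlinarith [mul_le_mul_of_nonneg_right hb₁ hr, mul_le_mul_of_nonneg_right ha₁ hl,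
    mul_le_mul_of_nonneg_right hb₂ ht, mul_le_mul_of_nonneg_right ha₂ hb]

lemma pos_and_sq_add_sq_le_of_eq_sSup (h₁ : a₁ < b₁) (h₂ : a₂ ≤ b₂) {R : ℝ}
    (hR : R = sSup ((fun p : ℝ × ℝ => p.1 ^ 2 + p.2 ^ 2) '' (Icc a₁ b₁ ×ˢ Icc a₂ b₂))) :
    0 < R ∧ ∀ x ∈ Icc a₁ b₁, ∀ y ∈ Icc a₂ b₂, x ^ 2 + y ^ 2 ≤ R := by
  have hle : ∀ x ∈ Icc a₁ b₁, ∀ y ∈ Icc a₂ b₂, x ^ 2 + y ^ 2 ≤ R := fun x hx y hy =>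
    hR ▸ le_csSup ((isCompact_Icc.prod isCompact_Icc).bddAbove_image (by fun_prop))
      ⟨(x, y), ⟨hx, hy⟩, rfl⟩
  refine ⟨?_, hle⟩
  have ha := hle a₁ (left_mem_Icc.2 h₁.le) a₂ (left_mem_Icc.2 h₂)
  have hb := hle b₁ (right_mem_Icc.2 h₁.le) a₂ (left_mem_Icc.2 h₂)
  nlinarith [sq_nonneg (a₁ + b₁), sq_nonneg a₂]

lemma bounds_le_of_eq_sSup_boundary_norm (h₂ : a₂ ≤ b₂) {R : ℝ}
    (hR : R = sSup ((fun p : ℝ × ℝ => Real.sqrt (p.1 ^ 2 + p.2 ^ 2)) ''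
      ((({a₁, b₁} : Set ℝ) ×ˢ Icc a₂ b₂) ∪ (Icc a₁ b₁ ×ˢ ({a₂, b₂} : Set ℝ))))) :
    b₁ ≤ R ∧ -a₁ ≤ R ∧ b₂ ≤ R ∧ -a₂ ≤ R := by
  have hK : IsCompact ((({a₁, b₁} : Set ℝ) ×ˢ Icc a₂ b₂) ∪ (Icc a₁ b₁ ×ˢ ({a₂, b₂} : Set ℝ))) :=
    ((toFinite _).isCompact.prod isCompact_Icc).union (isCompact_Icc.prod (toFinite _).isCompact)
  have hcorner : ∀ x ∈ ({a₁, b₁} : Set ℝ), ∀ y ∈ ({a₂, b₂} : Set ℝ), |x| ≤ R ∧ |y| ≤ R := by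
    intro x hx y hy
    have hxy : Real.sqrt (x ^ 2 + y ^ 2) ≤ R :=
      hR ▸ le_csSup (hK.bddAbove_image (by fun_prop)) ⟨(x, y), Or.inl ⟨hx, by
        rcases hy with rfl | rfl <;> simp [h₂]⟩, rfl⟩
    exact ⟨(Real.abs_le_sqrt (by nlinarith)).trans hxy, (Real.abs_le_sqrt (by nlinarith)).trans hxy⟩
  obtain ⟨ha₁, ha₂⟩ := hcorner a₁ (by simp) a₂ (by simp)
  obtain ⟨hb₁, hb₂⟩ := hcorner b₁ (by simp) b₂ (by simp)
  exact ⟨(le_abs_self _).trans hb₁, (neg_le_abs _).trans ha₁, (le_abs_self _).trans hb₂,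
    (neg_le_abs _).trans ha₂⟩

lemma integral_integral_diffusion_eq_bInt (h₁ : a₁ ≤ b₁) (h₂ : a₂ ≤ b₂) (Ta : ℝ)
    {T T₁ T₂ T₁₁ T₂₂ κ : ℝ → ℝ → ℝ}
    (hcT : ContinuousOn (fun p : ℝ × ℝ => T p.1 p.2) (Icc a₁ b₁ ×ˢ Icc a₂ b₂))
    (hcT₁ : ContinuousOn (fun p : ℝ × ℝ => T₁ p.1 p.2) (Icc a₁ b₁ ×ˢ Icc a₂ b₂))
    (hcT₂ : ContinuousOn (fun p : ℝ × ℝ => T₂ p.1 p.2) (Icc a₁ b₁ ×ˢ Icc a₂ b₂))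
    (hcT₁₁ : ContinuousOn (fun p : ℝ × ℝ => T₁₁ p.1 p.2) (Icc a₁ b₁ ×ˢ Icc a₂ b₂))
    (hcT₂₂ : ContinuousOn (fun p : ℝ × ℝ => T₂₂ p.1 p.2) (Icc a₁ b₁ ×ˢ Icc a₂ b₂))
    (hT₁ : ∀ x ∈ Icc a₁ b₁, ∀ y ∈ Icc a₂ b₂, HasDerivAt (T · y) (T₁ x y) x)
    (hT₂ : ∀ x ∈ Icc a₁ b₁, ∀ y ∈ Icc a₂ b₂, HasDerivAt (T x ·) (T₂ x y) y)
    (hT₁₁ : ∀ x ∈ Icc a₁ b₁, ∀ y ∈ Icc a₂ b₂, HasDerivAt (T₁ · y) (T₁₁ x y) x)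
    (hT₂₂ : ∀ x ∈ Icc a₁ b₁, ∀ y ∈ Icc a₂ b₂, HasDerivAt (T₂ x ·) (T₂₂ x y) y)
    (hbcl : ∀ y ∈ Icc a₂ b₂, -T₁ a₁ y = κ a₁ y) (hbcr : ∀ y ∈ Icc a₂ b₂, T₁ b₁ y = κ b₁ y)
    (hbcb : ∀ x ∈ Icc a₁ b₁, -T₂ x a₂ = κ x a₂) (hbct : ∀ x ∈ Icc a₁ b₁, T₂ x b₂ = κ x b₂) :
    ∫ x in a₁..b₁, ∫ y in a₂..b₂,
      ((T₁ x y * T₁ x y + (T x y - Ta) * T₁₁ x y) + (T₂ x y * T₂ x y + (T x y - Ta) * T₂₂ x y)) =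
      bInt a₁ b₁ a₂ b₂ (fun x y => κ x y * (T x y - Ta)) := by
  rw [integral_integral_divergence h₁ h₂ (F₁ := fun x y => (T x y - Ta) * T₁ x y)
    (F₂ := fun x y => (T x y - Ta) * T₂ x y) (by fun_prop) (by fun_prop) (by fun_prop)
    (by fun_prop) (fun x hx y hy => ((hT₁ x hx y hy).sub_const Ta).mul (hT₁₁ x hx y hy))
    (fun x hx y hy => ((hT₂ x hx y hy).sub_const Ta).mul (hT₂₂ x hx y hy))]
  exact boundary_flux_eq_bInt h₁ h₂ (u := fun x y => T x y - Ta) hbcl hbcr hbcb hbct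

lemma integral_integral_advection_eq (h₁ : a₁ ≤ b₁) (h₂ : a₂ ≤ b₂) (Ta : ℝ)
    {T T₁ T₂ v₁ v₂ dv₁ dv₂ : ℝ → ℝ → ℝ}
    (hcT : ContinuousOn (fun p : ℝ × ℝ => T p.1 p.2) (Icc a₁ b₁ ×ˢ Icc a₂ b₂))
    (hcT₁ : ContinuousOn (fun p : ℝ × ℝ => T₁ p.1 p.2) (Icc a₁ b₁ ×ˢ Icc a₂ b₂))
    (hcT₂ : ContinuousOn (fun p : ℝ × ℝ => T₂ p.1 p.2) (Icc a₁ b₁ ×ˢ Icc a₂ b₂))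
    (hcv₁ : ContinuousOn (fun p : ℝ × ℝ => v₁ p.1 p.2) (Icc a₁ b₁ ×ˢ Icc a₂ b₂))
    (hcv₂ : ContinuousOn (fun p : ℝ × ℝ => v₂ p.1 p.2) (Icc a₁ b₁ ×ˢ Icc a₂ b₂))
    (hcdv₁ : ContinuousOn (fun p : ℝ × ℝ => dv₁ p.1 p.2) (Icc a₁ b₁ ×ˢ Icc a₂ b₂))
    (hcdv₂ : ContinuousOn (fun p : ℝ × ℝ => dv₂ p.1 p.2) (Icc a₁ b₁ ×ˢ Icc a₂ b₂))
    (hT₁ : ∀ x ∈ Icc a₁ b₁, ∀ y ∈ Icc a₂ b₂, HasDerivAt (T · y) (T₁ x y) x)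
    (hT₂ : ∀ x ∈ Icc a₁ b₁, ∀ y ∈ Icc a₂ b₂, HasDerivAt (T x ·) (T₂ x y) y)
    (hdv₁ : ∀ x ∈ Icc a₁ b₁, ∀ y ∈ Icc a₂ b₂, HasDerivAt (v₁ · y) (dv₁ x y) x)
    (hdv₂ : ∀ x ∈ Icc a₁ b₁, ∀ y ∈ Icc a₂ b₂, HasDerivAt (v₂ x ·) (dv₂ x y) y) :
    ∫ x in a₁..b₁, ∫ y in a₂..b₂,
      ((dv₁ x y * (T x y - Ta) ^ 2 + v₁ x y * (2 * (T x y - Ta) * T₁ x y))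
        + (dv₂ x y * (T x y - Ta) ^ 2 + v₂ x y * (2 * (T x y - Ta) * T₂ x y))) =
      (∫ y in a₂..b₂, v₁ b₁ y * (T b₁ y - Ta) ^ 2) - (∫ y in a₂..b₂, v₁ a₁ y * (T a₁ y - Ta) ^ 2)
        + (∫ x in a₁..b₁, v₂ x b₂ * (T x b₂ - Ta) ^ 2)
        - (∫ x in a₁..b₁, v₂ x a₂ * (T x a₂ - Ta) ^ 2) :=
  integral_integral_divergence h₁ h₂ (F₁ := fun x y => v₁ x y * (T x y - Ta) ^ 2)
    (F₂ := fun x y => v₂ x y * (T x y - Ta) ^ 2) (by fun_prop) (by fun_prop) (by fun_prop)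
    (by fun_prop)
    (fun x hx y hy => (hdv₁ x hx y hy).mul (hasDerivAt_sub_const_sq Ta (hT₁ x hx y hy)))
    (fun x hx y hy => (hdv₂ x hx y hy).mul (hasDerivAt_sub_const_sq Ta (hT₂ x hx y hy)))

lemma integral_integral_moment_le (h₁ : a₁ ≤ b₁) (h₂ : a₂ ≤ b₂) (Ta : ℝ) {R : ℝ}
    (hb₁ : b₁ ≤ R) (ha₁ : -a₁ ≤ R) (hb₂ : b₂ ≤ R) (ha₂ : -a₂ ≤ R) {T T₁ T₂ : ℝ → ℝ → ℝ}
    (hcT : ContinuousOn (fun p : ℝ × ℝ => T p.1 p.2) (Icc a₁ b₁ ×ˢ Icc a₂ b₂))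
    (hcT₁ : ContinuousOn (fun p : ℝ × ℝ => T₁ p.1 p.2) (Icc a₁ b₁ ×ˢ Icc a₂ b₂))
    (hcT₂ : ContinuousOn (fun p : ℝ × ℝ => T₂ p.1 p.2) (Icc a₁ b₁ ×ˢ Icc a₂ b₂))
    (hT₁ : ∀ x ∈ Icc a₁ b₁, ∀ y ∈ Icc a₂ b₂, HasDerivAt (T · y) (T₁ x y) x)
    (hT₂ : ∀ x ∈ Icc a₁ b₁, ∀ y ∈ Icc a₂ b₂, HasDerivAt (T x ·) (T₂ x y) y) :
    ∫ x in a₁..b₁, ∫ y in a₂..b₂,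
      (((T x y - Ta) ^ 2 + x * (2 * (T x y - Ta) * T₁ x y))
        + ((T x y - Ta) ^ 2 + y * (2 * (T x y - Ta) * T₂ x y))) ≤
      R * bInt a₁ b₁ a₂ b₂ (fun x y => (T x y - Ta) ^ 2) := by
  rw [integral_integral_divergence h₁ h₂ (F₁ := fun x y => x * (T x y - Ta) ^ 2)
    (F₂ := fun x y => y * (T x y - Ta) ^ 2)
    (D₁ := fun x y => (T x y - Ta) ^ 2 + x * (2 * (T x y - Ta) * T₁ x y))
    (D₂ := fun x y => (T x y - Ta) ^ 2 + y * (2 * (T x y - Ta) * T₂ x y))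
    (by fun_prop) (by fun_prop) (by fun_prop) (by fun_prop)
    (fun x hx y hy => ((hasDerivAt_id' x).mul
      (hasDerivAt_sub_const_sq Ta (hT₁ x hx y hy))).congr_deriv (by ring))
    (fun x hx y hy => ((hasDerivAt_id' y).mul
      (hasDerivAt_sub_const_sq Ta (hT₂ x hx y hy))).congr_deriv (by ring))]
  exact boundary_moment_le h₁ h₂ hb₁ ha₁ hb₂ ha₂ (g := fun x y => (T x y - Ta) ^ 2)
    fun x y => sq_nonneg _

lemma hasDerivAt_half_integral_integral_sq (h₁ : a₁ ≤ b₁) (h₂ : a₂ ≤ b₂)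
    {T Tt : ℝ → ℝ → ℝ → ℝ} {Ta t : ℝ} (ht : 0 < t)
    (hcT : ContinuousOn (fun q : (ℝ × ℝ) × ℝ => T q.1.1 q.1.2 q.2)
      ((Icc a₁ b₁ ×ˢ Icc a₂ b₂) ×ˢ Ici 0))
    (hcTt : ContinuousOn (fun q : (ℝ × ℝ) × ℝ => Tt q.1.1 q.1.2 q.2)
      ((Icc a₁ b₁ ×ˢ Icc a₂ b₂) ×ˢ Ici 0))
    (hTt : ∀ x ∈ Icc a₁ b₁, ∀ y ∈ Icc a₂ b₂, ∀ τ, 0 < τ → HasDerivAt (T x y) (Tt x y τ) τ) :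
    HasDerivAt (fun τ => 1 / 2 * ∫ x in a₁..b₁, ∫ y in a₂..b₂, (T x y τ - Ta) ^ 2)
      (∫ x in a₁..b₁, ∫ y in a₂..b₂, (T x y t - Ta) * Tt x y t) t := by
  have hpos : ∀ τ ∈ Metric.closedBall t (t / 2), 0 < τ := fun τ hτ => by
    rw [Real.closedBall_eq_Icc] at hτ
    linarith [hτ.1]
  have hsub : (Icc a₁ b₁ ×ˢ Icc a₂ b₂) ×ˢ Metric.closedBall t (t / 2) ⊆
      (Icc a₁ b₁ ×ˢ Icc a₂ b₂) ×ˢ Ici 0 :=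
    prod_mono subset_rfl fun τ hτ => (hpos τ hτ).le
  have hcT' := hcT.mono hsub
  have hcTt' := hcTt.mono hsub
  have hd := hasDerivAt_integral_integral h₁ h₂ (half_pos ht)
    (F := fun x y τ => (T x y τ - Ta) ^ 2) (F' := fun x y τ => 2 * ((T x y τ - Ta) * Tt x y τ))
    (fun τ hτ => ((hcT.comp (continuous_id.prodMk continuous_const).continuousOn
      fun p hp => ⟨hp, (hpos τ (Metric.ball_subset_closedBall hτ)).le⟩).sub
        continuousOn_const).pow 2)
    (continuousOn_const.mul ((hcT'.sub continuousOn_const).mul hcTt'))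
    (fun x hx y hy τ hτ => (hasDerivAt_sub_const_sq Ta
      (hTt x hx y hy τ (hpos τ (Metric.ball_subset_closedBall hτ)))).congr_deriv (by ring))
  exact (hd.const_mul (1 / 2)).congr_deriv (by rw [integral_integral_const_mul]; ring)

lemma integral_integral_energy_rate_le (h₁ : a₁ ≤ b₁) (h₂ : a₂ ≤ b₂)
    {ε A C γ Ta Vs M R₁ R₂ α : ℝ} (hε : 0 ≤ ε) (hA : 0 ≤ A) (hγ : 0 < γ) (hR₁ : 0 < R₁)
    (hR₁K : ∀ x ∈ Icc a₁ b₁, ∀ y ∈ Icc a₂ b₂, x ^ 2 + y ^ 2 ≤ R₁)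
    (hb₁ : b₁ ≤ R₂) (ha₁ : -a₁ ≤ R₂) (hb₂ : b₂ ≤ R₂) (ha₂ : -a₂ ≤ R₂)
    (hα : α = 2 * A * C + 2 * ε / R₁ - Vs - (2 * A * Real.exp (-1) / γ) * M)
    {T S v₁ v₂ T₁ T₂ T₁₁ T₂₂ Tt dv₁ dv₂ κ : ℝ → ℝ → ℝ}
    (hcT : ContinuousOn (fun p : ℝ × ℝ => T p.1 p.2) (Icc a₁ b₁ ×ˢ Icc a₂ b₂))
    (hcv₁ : ContinuousOn (fun p : ℝ × ℝ => v₁ p.1 p.2) (Icc a₁ b₁ ×ˢ Icc a₂ b₂))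
    (hcv₂ : ContinuousOn (fun p : ℝ × ℝ => v₂ p.1 p.2) (Icc a₁ b₁ ×ˢ Icc a₂ b₂))
    (hcT₁ : ContinuousOn (fun p : ℝ × ℝ => T₁ p.1 p.2) (Icc a₁ b₁ ×ˢ Icc a₂ b₂))
    (hcT₂ : ContinuousOn (fun p : ℝ × ℝ => T₂ p.1 p.2) (Icc a₁ b₁ ×ˢ Icc a₂ b₂))
    (hcT₁₁ : ContinuousOn (fun p : ℝ × ℝ => T₁₁ p.1 p.2) (Icc a₁ b₁ ×ˢ Icc a₂ b₂))
    (hcT₂₂ : ContinuousOn (fun p : ℝ × ℝ => T₂₂ p.1 p.2) (Icc a₁ b₁ ×ˢ Icc a₂ b₂))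
    (hcTt : ContinuousOn (fun p : ℝ × ℝ => Tt p.1 p.2) (Icc a₁ b₁ ×ˢ Icc a₂ b₂))
    (hcdv₁ : ContinuousOn (fun p : ℝ × ℝ => dv₁ p.1 p.2) (Icc a₁ b₁ ×ˢ Icc a₂ b₂))
    (hcdv₂ : ContinuousOn (fun p : ℝ × ℝ => dv₂ p.1 p.2) (Icc a₁ b₁ ×ˢ Icc a₂ b₂))
    (hT₁ : ∀ x ∈ Icc a₁ b₁, ∀ y ∈ Icc a₂ b₂, HasDerivAt (T · y) (T₁ x y) x)
    (hT₂ : ∀ x ∈ Icc a₁ b₁, ∀ y ∈ Icc a₂ b₂, HasDerivAt (T x ·) (T₂ x y) y)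
    (hT₁₁ : ∀ x ∈ Icc a₁ b₁, ∀ y ∈ Icc a₂ b₂, HasDerivAt (T₁ · y) (T₁₁ x y) x)
    (hT₂₂ : ∀ x ∈ Icc a₁ b₁, ∀ y ∈ Icc a₂ b₂, HasDerivAt (T₂ x ·) (T₂₂ x y) y)
    (hdv₁ : ∀ x ∈ Icc a₁ b₁, ∀ y ∈ Icc a₂ b₂, HasDerivAt (v₁ · y) (dv₁ x y) x)
    (hdv₂ : ∀ x ∈ Icc a₁ b₁, ∀ y ∈ Icc a₂ b₂, HasDerivAt (v₂ x ·) (dv₂ x y) y)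
    (hPDE : ∀ x ∈ Icc a₁ b₁, ∀ y ∈ Icc a₂ b₂,
      Tt x y = ε * (T₁₁ x y + T₂₂ x y) - (v₁ x y * T₁ x y + v₂ x y * T₂ x y)
        + A * (S x y * rt γ (T x y - Ta) - C * (T x y - Ta)))
    (hdiv : ∀ x ∈ Icc a₁ b₁, ∀ y ∈ Icc a₂ b₂, dv₁ x y + dv₂ x y ≤ Vs)
    (hS : ∀ x ∈ Icc a₁ b₁, ∀ y ∈ Icc a₂ b₂, 0 ≤ S x y ∧ S x y ≤ M)
    (hbcl : ∀ y ∈ Icc a₂ b₂, -T₁ a₁ y = κ a₁ y) (hbcr : ∀ y ∈ Icc a₂ b₂, T₁ b₁ y = κ b₁ y)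
    (hbcb : ∀ x ∈ Icc a₁ b₁, -T₂ x a₂ = κ x a₂) (hbct : ∀ x ∈ Icc a₁ b₁, T₂ x b₂ = κ x b₂) :
    ∫ x in a₁..b₁, ∫ y in a₂..b₂, (T x y - Ta) * Tt x y ≤
      -α * (1 / 2 * ∫ x in a₁..b₁, ∫ y in a₂..b₂, (T x y - Ta) ^ 2)
        + ε * bInt a₁ b₁ a₂ b₂ (fun x y => κ x y * (T x y - Ta))
        - 1 / 2 * ((∫ y in a₂..b₂, v₁ b₁ y * (T b₁ y - Ta) ^ 2)
            - (∫ y in a₂..b₂, v₁ a₁ y * (T a₁ y - Ta) ^ 2)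
            + (∫ x in a₁..b₁, v₂ x b₂ * (T x b₂ - Ta) ^ 2)
            - (∫ x in a₁..b₁, v₂ x a₂ * (T x a₂ - Ta) ^ 2))
        + 2 * ε * (R₂ / R₁) * bInt a₁ b₁ a₂ b₂ (fun x y => (T x y - Ta) ^ 2) := by
  have hpointwise : ∀ x ∈ Icc a₁ b₁, ∀ y ∈ Icc a₂ b₂, (T x y - Ta) * Tt x y ≤
      ε * ((T₁ x y * T₁ x y + (T x y - Ta) * T₁₁ x y)
          + (T₂ x y * T₂ x y + (T x y - Ta) * T₂₂ x y))
        - 1 / 2 * ((dv₁ x y * (T x y - Ta) ^ 2 + v₁ x y * (2 * (T x y - Ta) * T₁ x y))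
          + (dv₂ x y * (T x y - Ta) ^ 2 + v₂ x y * (2 * (T x y - Ta) * T₂ x y)))
        + ε / R₁ * (((T x y - Ta) ^ 2 + x * (2 * (T x y - Ta) * T₁ x y))
          + ((T x y - Ta) ^ 2 + y * (2 * (T x y - Ta) * T₂ x y)))
        - α / 2 * (T x y - Ta) ^ 2 := fun x hx y hy => by
    rw [hPDE x hx y hy]
    exact energy_density_le hε hA hγ hR₁ (hR₁K x hx y hy) (hdiv x hx y hy)
      (hS x hx y hy).1 (hS x hx y hy).2 hα
  have hbound := integral_integral_mono h₁ h₂ (by fun_prop) (by fun_prop) hpointwise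
  have hmoment := integral_integral_moment_le h₁ h₂ Ta hb₁ ha₁ hb₂ ha₂ hcT hcT₁ hcT₂ hT₁ hT₂
  rw [integral_integral_sub h₁ h₂ (by fun_prop) (by fun_prop),
    integral_integral_add h₁ h₂ (by fun_prop) (by fun_prop),
    integral_integral_sub h₁ h₂ (by fun_prop) (by fun_prop),
    integral_integral_const_mul, integral_integral_const_mul, integral_integral_const_mul,
    integral_integral_const_mul,
    integral_integral_diffusion_eq_bInt h₁ h₂ Ta hcT hcT₁ hcT₂ hcT₁₁ hcT₂₂ hT₁ hT₂ hT₁₁ hT₂₂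
      hbcl hbcr hbcb hbct,
    integral_integral_advection_eq h₁ h₂ Ta hcT hcT₁ hcT₂ hcv₁ hcv₂ hcdv₁ hcdv₂ hT₁ hT₂ hdv₁ hdv₂]
    at hbound
  -- the moment term needs only half of the boundary allowance `2ε(R₂/R₁)∮u²`
  set N := bInt a₁ b₁ a₂ b₂ (fun x y => (T x y - Ta) ^ 2)
  have hN : 0 ≤ ε * (R₂ / R₁) * N := mul_nonneg (mul_nonneg hε (div_nonneg (by linarith) hR₁.le))
    (bInt_nonneg h₁ h₂ fun x y => sq_nonneg (T x y - Ta))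
  have hmoment' := mul_le_mul_of_nonneg_left hmoment (div_nonneg hε hR₁.le)
  rw [show ε / R₁ * (R₂ * N) = ε * (R₂ / R₁) * N by ring] at hmoment'
  linarith

end Rectangle

theorem stmt8_general
    (a₁ b₁ a₂ b₂ ε A C γ Ta : ℝ)
    (ha : a₁ < b₁) (hb : a₂ < b₂)
    (hε : 0 < ε) (hA : 0 < A) (hγ : 0 < γ)
    (W bW : Set (ℝ × ℝ))
    (hW : W = Icc a₁ b₁ ×ˢ Icc a₂ b₂)
    (hbW : bW = (({a₁, b₁} : Set ℝ) ×ˢ Icc a₂ b₂) ∪ (Icc a₁ b₁ ×ˢ ({a₂, b₂} : Set ℝ)))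
    (T S v₁ v₂ T₁ T₂ T₁₁ T₂₂ Tt dv₁ dv₂ : ℝ → ℝ → ℝ → ℝ)
    (S₀ : ℝ → ℝ → ℝ)
    -- spatial and temporal derivatives of T and spatial derivatives of v
    (hT₁ : ∀ x y t, 0 ≤ t → HasDerivAt (fun s => T s y t) (T₁ x y t) x)
    (hT₂ : ∀ x y t, 0 ≤ t → HasDerivAt (fun s => T x s t) (T₂ x y t) y)
    (hT₁₁ : ∀ x y t, 0 ≤ t → HasDerivAt (fun s => T₁ s y t) (T₁₁ x y t) x)
    (hT₂₂ : ∀ x y t, 0 ≤ t → HasDerivAt (fun s => T₂ x s t) (T₂₂ x y t) y)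
    (hTt : ∀ x y t, 0 < t → HasDerivAt (fun τ => T x y τ) (Tt x y t) t)
    (hdv₁ : ∀ x y t, 0 ≤ t → HasDerivAt (fun s => v₁ s y t) (dv₁ x y t) x)
    (hdv₂ : ∀ x y t, 0 ≤ t → HasDerivAt (fun s => v₂ x s t) (dv₂ x y t) y)
    -- joint continuity on W × [0,∞) of T, S, v and all the above derivatives
    (hcont : ∀ f ∈ [T, S, v₁, v₂, T₁, T₂, T₁₁, T₂₂, Tt, dv₁, dv₂],
      ContinuousOn (fun q : (ℝ × ℝ) × ℝ => f q.1.1 q.1.2 q.2) (W ×ˢ Ici (0 : ℝ)))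
    -- the PDEs on W × (0,∞)
    (hPDE : ∀ x y, (x, y) ∈ W → ∀ t, 0 < t →
      Tt x y t = ε * (T₁₁ x y t + T₂₂ x y t)
        - (v₁ x y t * T₁ x y t + v₂ x y t * T₂ x y t)
        + A * (S x y t * rt γ (T x y t - Ta) - C * (T x y t - Ta)))
    -- initial data
    (hS0b : ∀ x y, (x, y) ∈ W → 0 ≤ S₀ x y ∧ S₀ x y ≤ 1)
    -- fuel bound: 0 ≤ S(x,t) ≤ S₀(x) on W × [0,∞)
    (hSb : ∀ x y, (x, y) ∈ W → ∀ t, 0 ≤ t → 0 ≤ S x y t ∧ S x y t ≤ S₀ x y)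
    -- the constants R₁, R₂, 𝒱, sup S₀, α and the energy B
    (R₁ R₂ Vs MS₀ α : ℝ) (B : ℝ → ℝ)
    (hR₁ : R₁ = sSup ((fun p : ℝ × ℝ => p.1 ^ 2 + p.2 ^ 2) '' W))
    (hR₂ : R₂ = sSup ((fun p : ℝ × ℝ => Real.sqrt (p.1 ^ 2 + p.2 ^ 2)) '' bW))
    (hVs : Vs = sSup ((fun q : (ℝ × ℝ) × ℝ =>
      |dv₁ q.1.1 q.1.2 q.2 + dv₂ q.1.1 q.1.2 q.2|) '' (W ×ˢ Ioi (0 : ℝ))))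
    (hVbdd : BddAbove ((fun q : (ℝ × ℝ) × ℝ =>
      |dv₁ q.1.1 q.1.2 q.2 + dv₂ q.1.1 q.1.2 q.2|) '' (W ×ˢ Ioi (0 : ℝ))))
    (hMS₀ : MS₀ = sSup ((fun p : ℝ × ℝ => S₀ p.1 p.2) '' W))
    (hα : α = 2 * A * C + 2 * ε / R₁ - Vs - (2 * A * Real.exp (-1) / γ) * MS₀)
    (hB : B = fun t => (1 / 2) * ∫ x in a₁..b₁, ∫ y in a₂..b₂, (T x y t - Ta) ^ 2)
    -- the boundary control κ, continuous on ∂W × (0,∞)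
    (κ : ℝ → ℝ → ℝ → ℝ)
    -- the boundary condition ∂T/∂n = κ on each edge of ∂W, for t > 0
    (hbcl : ∀ y ∈ Icc a₂ b₂, ∀ t, 0 < t → -T₁ a₁ y t = κ a₁ y t)
    (hbcr : ∀ y ∈ Icc a₂ b₂, ∀ t, 0 < t → T₁ b₁ y t = κ b₁ y t)
    (hbcb : ∀ x ∈ Icc a₁ b₁, ∀ t, 0 < t → -T₂ x a₂ t = κ x a₂ t)
    (hbct : ∀ x ∈ Icc a₁ b₁, ∀ t, 0 < t → T₂ x b₂ t = κ x b₂ t) :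
    ∃ B' : ℝ → ℝ, ∀ t, 0 < t → HasDerivAt B (B' t) t ∧
      B' t ≤ -α * B t
        + ε * bInt a₁ b₁ a₂ b₂ (fun x y => κ x y t * (T x y t - Ta))
        - (1 / 2) * ((∫ y in a₂..b₂, v₁ b₁ y t * (T b₁ y t - Ta) ^ 2)
            - (∫ y in a₂..b₂, v₁ a₁ y t * (T a₁ y t - Ta) ^ 2)
            + (∫ x in a₁..b₁, v₂ x b₂ t * (T x b₂ t - Ta) ^ 2)
            - (∫ x in a₁..b₁, v₂ x a₂ t * (T x a₂ t - Ta) ^ 2))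
        + 2 * ε * (R₂ / R₁) * bInt a₁ b₁ a₂ b₂ (fun x y => (T x y t - Ta) ^ 2) := by
  subst hW hbW hB
  obtain ⟨hR₁pos, hR₁K⟩ := pos_and_sq_add_sq_le_of_eq_sSup ha hb.le hR₁
  obtain ⟨hb₁, ha₁, hb₂, ha₂⟩ := bounds_le_of_eq_sSup_boundary_norm hb.le hR₂
  refine ⟨fun t => ∫ x in a₁..b₁, ∫ y in a₂..b₂, (T x y t - Ta) * Tt x y t, fun t ht =>
    ⟨hasDerivAt_half_integral_integral_sq ha.le hb.le ht (hcont T (by simp)) (hcont Tt (by simp))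
      fun x _ y _ => hTt x y, ?_⟩⟩
  have slice : ∀ f ∈ [T, S, v₁, v₂, T₁, T₂, T₁₁, T₂₂, Tt, dv₁, dv₂],
      ContinuousOn (fun p : ℝ × ℝ => f p.1 p.2 t) (Icc a₁ b₁ ×ˢ Icc a₂ b₂) :=
    fun f hf => (hcont f hf).comp (continuous_id.prodMk continuous_const).continuousOn
      fun p hp => ⟨hp, ht.le⟩
  have hdiv : ∀ x ∈ Icc a₁ b₁, ∀ y ∈ Icc a₂ b₂, dv₁ x y t + dv₂ x y t ≤ Vs := fun x hx y hy =>
    hVs ▸ (le_abs_self _).trans (le_csSup hVbdd ⟨((x, y), t), ⟨⟨hx, hy⟩, ht⟩, rfl⟩)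
  have hS0bdd : BddAbove ((fun p : ℝ × ℝ => S₀ p.1 p.2) '' (Icc a₁ b₁ ×ˢ Icc a₂ b₂)) :=
    ⟨1, by rintro _ ⟨p, hp, rfl⟩; exact (hS0b p.1 p.2 hp).2⟩
  have hS : ∀ x ∈ Icc a₁ b₁, ∀ y ∈ Icc a₂ b₂, 0 ≤ S x y t ∧ S x y t ≤ MS₀ := fun x hx y hy =>
    ⟨(hSb x y ⟨hx, hy⟩ t ht.le).1, (hSb x y ⟨hx, hy⟩ t ht.le).2.trans
      (hMS₀ ▸ le_csSup hS0bdd ⟨(x, y), ⟨hx, hy⟩, rfl⟩)⟩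
  exact integral_integral_energy_rate_le (T := fun x y => T x y t) (Tt := fun x y => Tt x y t)
    (v₁ := fun x y => v₁ x y t) (v₂ := fun x y => v₂ x y t) (κ := fun x y => κ x y t)
    ha.le hb.le hε.le hA.le hγ hR₁pos hR₁K hb₁ ha₁ hb₂ ha₂ hα
    (slice T (by simp)) (slice v₁ (by simp)) (slice v₂ (by simp)) (slice T₁ (by simp))
    (slice T₂ (by simp)) (slice T₁₁ (by simp)) (slice T₂₂ (by simp)) (slice Tt (by simp))
    (slice dv₁ (by simp)) (slice dv₂ (by simp))
    (fun x _ y _ => hT₁ x y t ht.le) (fun x _ y _ => hT₂ x y t ht.le)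
    (fun x _ y _ => hT₁₁ x y t ht.le) (fun x _ y _ => hT₂₂ x y t ht.le)
    (fun x _ y _ => hdv₁ x y t ht.le) (fun x _ y _ => hdv₂ x y t ht.le)
    (fun x hx y hy => hPDE x y ⟨hx, hy⟩ t ht) hdiv hS
    (fun y hy => hbcl y hy t ht) (fun y hy => hbcr y hy t ht)
    (fun x hx => hbcb x hx t ht) (fun x hx => hbct x hx t ht)

/-- Energy estimate for the wildfire model on the rectangle `W = [a₁,b₁]×[a₂,b₂]`
under a general Neumann boundary control `∂T/∂n = κ` on `∂W`:
`B′(t) ≤ −α·B(t) + ε·∫_{∂W} κ·T̃ dσ − ½·∫_{∂W}(n·v)·T̃² dσ + 2ε·(R₂/R₁)·∫_{∂W} T̃² dσ`. -/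
theorem stmt8
    (a₁ b₁ a₂ b₂ ε A C γ Ta CS : ℝ)
    (ha : a₁ < b₁) (hb : a₂ < b₂)
    (hε : 0 < ε) (hA : 0 < A) (hC : 0 < C) (hγ : 0 < γ) (hTa : 0 < Ta) (hCS : 0 ≤ CS)
    (W bW : Set (ℝ × ℝ))
    (hW : W = Icc a₁ b₁ ×ˢ Icc a₂ b₂)
    (hbW : bW = (({a₁, b₁} : Set ℝ) ×ˢ Icc a₂ b₂) ∪ (Icc a₁ b₁ ×ˢ ({a₂, b₂} : Set ℝ)))
    (T S v₁ v₂ T₁ T₂ T₁₁ T₂₂ Tt dv₁ dv₂ : ℝ → ℝ → ℝ → ℝ)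
    (T₀ S₀ : ℝ → ℝ → ℝ)
    -- spatial and temporal derivatives of T and spatial derivatives of v
    (hT₁ : ∀ x y t, 0 ≤ t → HasDerivAt (fun s => T s y t) (T₁ x y t) x)
    (hT₂ : ∀ x y t, 0 ≤ t → HasDerivAt (fun s => T x s t) (T₂ x y t) y)
    (hT₁₁ : ∀ x y t, 0 ≤ t → HasDerivAt (fun s => T₁ s y t) (T₁₁ x y t) x)
    (hT₂₂ : ∀ x y t, 0 ≤ t → HasDerivAt (fun s => T₂ x s t) (T₂₂ x y t) y)
    (hTt : ∀ x y t, 0 < t → HasDerivAt (fun τ => T x y τ) (Tt x y t) t)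
    (hdv₁ : ∀ x y t, 0 ≤ t → HasDerivAt (fun s => v₁ s y t) (dv₁ x y t) x)
    (hdv₂ : ∀ x y t, 0 ≤ t → HasDerivAt (fun s => v₂ x s t) (dv₂ x y t) y)
    -- joint continuity on W × [0,∞) of T, S, v and all the above derivatives
    (hcont : ∀ f ∈ [T, S, v₁, v₂, T₁, T₂, T₁₁, T₂₂, Tt, dv₁, dv₂],
      ContinuousOn (fun q : (ℝ × ℝ) × ℝ => f q.1.1 q.1.2 q.2) (W ×ˢ Ici (0 : ℝ)))
    -- the PDEs on W × (0,∞)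
    (hPDE : ∀ x y, (x, y) ∈ W → ∀ t, 0 < t →
      Tt x y t = ε * (T₁₁ x y t + T₂₂ x y t)
        - (v₁ x y t * T₁ x y t + v₂ x y t * T₂ x y t)
        + A * (S x y t * rt γ (T x y t - Ta) - C * (T x y t - Ta)))
    (hSdot : ∀ x y, (x, y) ∈ W → ∀ t, 0 < t →
      HasDerivAt (fun τ => S x y τ) (-CS * S x y t * rt γ (T x y t - Ta)) t)
    -- initial data
    (hT0 : ∀ x y, T x y 0 = T₀ x y) (hS0 : ∀ x y, S x y 0 = S₀ x y)
    (hS0b : ∀ x y, (x, y) ∈ W → 0 ≤ S₀ x y ∧ S₀ x y ≤ 1)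
    -- fuel bound: 0 ≤ S(x,t) ≤ S₀(x) on W × [0,∞)
    (hSb : ∀ x y, (x, y) ∈ W → ∀ t, 0 ≤ t → 0 ≤ S x y t ∧ S x y t ≤ S₀ x y)
    -- the constants R₁, R₂, 𝒱, sup S₀, α and the energy B
    (R₁ R₂ Vs MS₀ α : ℝ) (B : ℝ → ℝ)
    (hR₁ : R₁ = sSup ((fun p : ℝ × ℝ => p.1 ^ 2 + p.2 ^ 2) '' W))
    (hR₂ : R₂ = sSup ((fun p : ℝ × ℝ => Real.sqrt (p.1 ^ 2 + p.2 ^ 2)) '' bW))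
    (hVs : Vs = sSup ((fun q : (ℝ × ℝ) × ℝ =>
      |dv₁ q.1.1 q.1.2 q.2 + dv₂ q.1.1 q.1.2 q.2|) '' (W ×ˢ Ioi (0 : ℝ))))
    (hVbdd : BddAbove ((fun q : (ℝ × ℝ) × ℝ =>
      |dv₁ q.1.1 q.1.2 q.2 + dv₂ q.1.1 q.1.2 q.2|) '' (W ×ˢ Ioi (0 : ℝ))))
    (hMS₀ : MS₀ = sSup ((fun p : ℝ × ℝ => S₀ p.1 p.2) '' W))
    (hα : α = 2 * A * C + 2 * ε / R₁ - Vs - (2 * A * Real.exp (-1) / γ) * MS₀)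
    (hB : B = fun t => (1 / 2) * ∫ x in a₁..b₁, ∫ y in a₂..b₂, (T x y t - Ta) ^ 2)
    -- the boundary control κ, continuous on ∂W × (0,∞)
    (κ : ℝ → ℝ → ℝ → ℝ)
    (hκcont : ContinuousOn (fun q : (ℝ × ℝ) × ℝ => κ q.1.1 q.1.2 q.2) (bW ×ˢ Ioi (0 : ℝ)))
    -- the boundary condition ∂T/∂n = κ on each edge of ∂W, for t > 0
    (hbcl : ∀ y ∈ Icc a₂ b₂, ∀ t, 0 < t → -T₁ a₁ y t = κ a₁ y t)
    (hbcr : ∀ y ∈ Icc a₂ b₂, ∀ t, 0 < t → T₁ b₁ y t = κ b₁ y t)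
    (hbcb : ∀ x ∈ Icc a₁ b₁, ∀ t, 0 < t → -T₂ x a₂ t = κ x a₂ t)
    (hbct : ∀ x ∈ Icc a₁ b₁, ∀ t, 0 < t → T₂ x b₂ t = κ x b₂ t) :
    ∃ B' : ℝ → ℝ, ∀ t, 0 < t → HasDerivAt B (B' t) t ∧
      B' t ≤ -α * B t
        + ε * bInt a₁ b₁ a₂ b₂ (fun x y => κ x y t * (T x y t - Ta))
        - (1 / 2) * ((∫ y in a₂..b₂, v₁ b₁ y t * (T b₁ y t - Ta) ^ 2)
            - (∫ y in a₂..b₂, v₁ a₁ y t * (T a₁ y t - Ta) ^ 2)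
            + (∫ x in a₁..b₁, v₂ x b₂ t * (T x b₂ t - Ta) ^ 2)
            - (∫ x in a₁..b₁, v₂ x a₂ t * (T x a₂ t - Ta) ^ 2))
        + 2 * ε * (R₂ / R₁) * bInt a₁ b₁ a₂ b₂ (fun x y => (T x y t - Ta) ^ 2) :=
  stmt8_general a₁ b₁ a₂ b₂ ε A C γ Ta ha hb hε hA hγ W bW hW hbW T S v₁ v₂ T₁ T₂ T₁₁ T₂₂ Tt dv₁ dv₂
    S₀ hT₁ hT₂ hT₁₁ hT₂₂ hTt hdv₁ hdv₂ hcont hPDE hS0b hSb R₁ R₂ Vs MS₀ α B hR₁ hR₂ hVs hVbdd hMS₀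
    hα hB κ hbcl hbcr hbcb hbct
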